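/- Every graph G on n ≥ 3 vertices with minimum degree δ(G) ≥ n/2 is Hamiltonian. -/

import Mathlib

/-!
Take a longest path `a = v₀, …, v_k = b`. By maximality every neighbour of `a` and of `b` lies on
it, and since `deg a + deg b ≥ n > k`, pigeonhole gives an index `i` with `a ~ v_{i+1}` and
`b ~ v_i`; then `a, v_{i+1}, …, b, v_i, …, v₀ = a` is a cycle through all `k + 1` vertices of the
path. The degree condition also makes `G` connected, so if the cycle missed a vertex, an edge
leaving it would yield a path of length `k + 1`.
-/

open Finset

namespace SimpleGraph

variable {V : Type*} {G : SimpleGraph V}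

lemma exists_adj_adj_of_card_le_degree_add_degree [Fintype V] [DecidableRel G.Adj] {u v : V}
    (huv : u ≠ v) (hadj : ¬G.Adj u v) (h : Fintype.card V ≤ G.degree u + G.degree v + 1) :
    ∃ w, G.Adj u w ∧ G.Adj w v := by
  classical
  have hu : G.neighborFinset u ⊆ ({u, v} : Finset V)ᶜ := fun w hw => by
    rw [mem_neighborFinset] at hw
    simp only [mem_compl, mem_insert, mem_singleton, not_or]
    exact ⟨hw.ne', fun h => hadj (h ▸ hw)⟩
  have hv : G.neighborFinset v ⊆ ({u, v} : Finset V)ᶜ := fun w hw => by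
    rw [mem_neighborFinset] at hw
    simp only [mem_compl, mem_insert, mem_singleton, not_or]
    exact ⟨fun h => hadj (h ▸ hw.symm), hw.ne'⟩
  obtain ⟨w, hw⟩ := inter_nonempty_of_card_lt_card_add_card hu hv (by
    have h2 : #({u, v} : Finset V) ≤ Fintype.card V := card_le_univ _
    rw [card_pair huv] at h2
    rw [card_compl, card_pair huv, card_neighborFinset_eq_degree, card_neighborFinset_eq_degree]
    omega)
  rw [mem_inter, mem_neighborFinset, mem_neighborFinset] at hw
  exact ⟨w, hw.1, hw.2.symm⟩

lemma preconnected_of_card_le_degree_add_degree [Fintype V] [DecidableRel G.Adj]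
    (h : ∀ u v, u ≠ v → ¬G.Adj u v → Fintype.card V ≤ G.degree u + G.degree v + 1) :
    G.Preconnected := by
  intro u v
  rcases eq_or_ne u v with rfl | huv
  · rfl
  by_cases hadj : G.Adj u v
  · exact hadj.reachable
  obtain ⟨w, huw, hwv⟩ := exists_adj_adj_of_card_le_degree_add_degree huv hadj (h u v huv hadj)
  exact huw.reachable.trans hwv.reachable

lemma exists_isPath_forall_length_le [Finite V] [Nonempty V] (G : SimpleGraph V) :
    ∃ (a b : V) (p : G.Walk a b), p.IsPath ∧
      ∀ (x y : V) (q : G.Walk x y), q.IsPath → q.length ≤ p.length := by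
  have := Fintype.ofFinite V
  let S : Set ℕ := {k | ∃ (a b : V) (p : G.Walk a b), p.IsPath ∧ p.length = k}
  have hS : BddAbove S := ⟨Fintype.card V, by rintro _ ⟨a, b, p, hp, rfl⟩; exact hp.length_lt.le⟩
  obtain ⟨a, b, p, hp, hlen⟩ : sSup S ∈ S :=
    Nat.sSup_mem ⟨0, Classical.arbitrary V, _, .nil, .nil, rfl⟩ hS
  exact ⟨a, b, p, hp, fun x y q hq => hlen ▸ le_csSup hS ⟨x, y, q, hq, rfl⟩⟩

namespace Walk

variable {a b : V}

lemma IsPath.mem_support_of_adj_of_forall_length_le {p : G.Walk a b} (hp : p.IsPath)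
    (hmax : ∀ (x y : V) (q : G.Walk x y), q.IsPath → q.length ≤ p.length) :
    ∀ c, G.Adj a c → c ∈ p.support := by
  intro c hc
  by_contra h
  have := hmax _ _ _ (hp.cons (h := hc.symm) h)
  simp at this

lemma degree_le_card_filter_adj_getVert [DecidableRel G.Adj] (p : G.Walk a b) {x : V}
    [Fintype (G.neighborSet x)] (f : ℕ → ℕ)
    (hx : ∀ c, G.Adj x c → c ∈ p.support)
    (hf : ∀ j ≤ p.length, G.Adj x (p.getVert j) → ∃ i < p.length, f i = j) :
    G.degree x ≤ #{i ∈ range p.length | G.Adj x (p.getVert (f i))} := by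
  classical
  rw [← card_neighborFinset_eq_degree]
  refine (card_le_card fun c hc => ?_).trans (card_image_le (f := fun i => p.getVert (f i)))
  rw [mem_neighborFinset] at hc
  obtain ⟨j, rfl, hj⟩ := mem_support_iff_exists_getVert.mp (hx c hc)
  obtain ⟨i, hi, rfl⟩ := hf j hj hc
  exact mem_image.mpr ⟨i, by simp [hi, hc], rfl⟩

lemma degree_le_card_filter_adj_getVert_succ [DecidableRel G.Adj] (p : G.Walk a b)
    [Fintype (G.neighborSet a)] (ha : ∀ c, G.Adj a c → c ∈ p.support) :
    G.degree a ≤ #{i ∈ range p.length | G.Adj a (p.getVert (i + 1))} :=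
  p.degree_le_card_filter_adj_getVert (· + 1) ha fun j _ hj =>
    have : j ≠ 0 := by rintro rfl; simp at hj
    ⟨j - 1, by omega, by omega⟩

lemma degree_le_length_of_forall_adj_mem_support [DecidableRel G.Adj] (p : G.Walk a b)
    [Fintype (G.neighborSet a)] (ha : ∀ c, G.Adj a c → c ∈ p.support) :
    G.degree a ≤ p.length :=
  (p.degree_le_card_filter_adj_getVert_succ ha).trans <|
    (card_filter_le _ _).trans (card_range _).le

lemma exists_adj_getVert_succ_adj_getVert [DecidableRel G.Adj] (p : G.Walk a b)
    [Fintype (G.neighborSet a)] [Fintype (G.neighborSet b)]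
    (ha : ∀ c, G.Adj a c → c ∈ p.support) (hb : ∀ c, G.Adj b c → c ∈ p.support)
    (h : p.length < G.degree a + G.degree b) :
    ∃ i < p.length, G.Adj a (p.getVert (i + 1)) ∧ G.Adj b (p.getVert i) := by
  have hA := p.degree_le_card_filter_adj_getVert_succ ha
  have hB := p.degree_le_card_filter_adj_getVert id hb fun j hjk hj =>
    have : j ≠ p.length := by rintro rfl; simp at hj
    ⟨j, by omega, rfl⟩
  obtain ⟨i, hi⟩ := inter_nonempty_of_card_lt_card_add_card (filter_subset _ _)
    (filter_subset _ _) ((card_range _).trans_lt (h.trans_le (add_le_add hA hB)))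
  simp only [mem_inter, mem_filter, mem_range] at hi
  exact ⟨i, hi.1.1, hi.1.2, hi.2.2⟩

lemma IsPath.exists_isCycle_length_eq_add_one {p : G.Walk a b} (hp : p.IsPath)
    (hlen : 2 ≤ p.length) {i : ℕ} (hi : i < p.length) (ha : G.Adj a (p.getVert (i + 1)))
    (hb : G.Adj b (p.getVert i)) :
    ∃ C : G.Walk a a, C.IsCycle ∧ C.length = p.length + 1 := by
  set Q := (p.drop (i + 1)).append (cons hb (p.take i).reverse)
  have hperm : Q.support.Perm p.support := by
    simp only [Q, support_append, support_cons, List.tail_cons, support_reverse,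
      drop_support_eq_support_drop_min, support_take, min_eq_left hi.nat_succ_le]
    exact List.perm_append_comm.trans <|
      ((List.reverse_perm _).append_right _).trans (by rw [List.take_append_drop])
  have hQ : Q.IsPath := (isPath_def _).mpr (hperm.nodup_iff.mpr hp.support_nodup)
  have hQlen : Q.length = p.length := by simpa [length_support] using hperm.length_eq
  refine ⟨cons ha Q, ?_, by simp [hQlen]⟩
  rw [isCycle_iff_isPath_tail_and_le_length, tail_cons, length_cons, hQlen]
  exact ⟨(isPath_copy _ _ _).mpr hQ, by omega⟩

lemma IsCycle.isHamiltonianCycle_of_forall_isPath_length_lt [DecidableEq V] {C : G.Walk a a}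
    (hC : C.IsCycle) (hG : G.Preconnected)
    (hmax : ∀ (x y : V) (q : G.Walk x y), q.IsPath → q.length < C.length) :
    C.IsHamiltonianCycle := by
  have hmem : ∀ w, w ∈ C.support := by
    by_contra! ⟨w, hw⟩
    obtain ⟨W⟩ := hG a w
    obtain ⟨d, -, hd, hd'⟩ := W.exists_boundary_dart {x | x ∈ C.support} C.start_mem_support hw
    -- rotate `C` to start at `d.fst`, drop its first edge and append `d`: a path as long as `C`
    set D := C.rotate d.fst hd
    have hD : D.IsCycle := hC.rotate hd
    have hd'D : d.snd ∉ D.tail.support := fun h => hd' <| (mem_support_rotate_iff ..).mp <|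
      List.mem_of_mem_tail (support_tail_of_not_nil D hD.not_nil ▸ h)
    have := hmax _ _ _ (hD.isPath_tail.concat hd'D d.adj)
    rw [length_concat, length_tail_add_one hD.not_nil, length_rotate] at this
    omega
  refine isHamiltonianCycle_isCycle_and_isHamiltonian_tail.mpr
    ⟨hC, hC.isPath_tail.isHamiltonian_of_mem fun w => ?_⟩
  rw [support_tail_of_not_nil C hC.not_nil]
  rcases List.mem_cons.mp (C.cons_tail_support ▸ hmem w) with rfl | h
  · exact end_mem_tail_support hC.not_nil
  · exact h

end Walk
end SimpleGraph

open SimpleGraph Walk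

/-- Dirac's theorem: every graph on `n ≥ 3` vertices with minimum degree at least `n/2`
is Hamiltonian. -/
theorem stmt_5 {V : Type*} [Fintype V] [DecidableEq V] (G : SimpleGraph V) [DecidableRel G.Adj]
    (hn : 3 ≤ Fintype.card V)
    (hδ : ∀ v : V, (Fintype.card V : ℝ) / 2 ≤ G.degree v) :
    G.IsHamiltonian := by
  have hdeg : ∀ u v, Fintype.card V ≤ G.degree u + G.degree v := fun u v => by
    have := hδ u
    have := hδ v
    exact_mod_cast (by linarith : (Fintype.card V : ℝ) ≤ G.degree u + G.degree v)
  have : Nonempty V := Fintype.card_pos_iff.mp (by omega)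
  obtain ⟨a, b, p, hp, hmax⟩ := G.exists_isPath_forall_length_le
  have ha := hp.mem_support_of_adj_of_forall_length_le hmax
  have hb := hp.reverse.mem_support_of_adj_of_forall_length_le (by simpa using hmax)
  simp only [support_reverse, List.mem_reverse] at hb
  have hlen : 2 ≤ p.length := by
    have := p.degree_le_length_of_forall_adj_mem_support ha
    have := hdeg a a
    omega
  obtain ⟨i, hi, hai, hbi⟩ := p.exists_adj_getVert_succ_adj_getVert ha hb
    (by have := hdeg a b; have := hp.length_lt; omega)
  obtain ⟨C, hC, hClen⟩ := hp.exists_isCycle_length_eq_add_one hlen hi hai hbi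
  have hG : G.Preconnected := preconnected_of_card_le_degree_add_degree fun u v _ _ =>
    (hdeg u v).trans (Nat.le_succ _)
  exact fun _ => ⟨a, C, hC.isHamiltonianCycle_of_forall_isPath_length_lt hG fun x y q hq =>
    hClen ▸ Nat.lt_succ_of_le (hmax x y q hq)⟩
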